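/- For all n ≥ 0 and k ≥ 0, q^{k(k+1)} · S_B[n,k] = Σ_{ρ ∈ S_B(⟨n⟩,k)} q^{los_{B'}(ρ)}, where the sum is over standard type B partitions of ⟨n⟩ with 2k+1 blocks. -/

import Mathlib

open Finset Polynomial

/-- The ground set ⟨n⟩ = {-n, ..., -1, 0, 1, ..., n}. -/
noncomputable def angleB (n : ℕ) : Finset ℤ := Finset.Icc (-(n : ℤ)) (n : ℤ)

/-- An ordered type B (signed) partition of ⟨n⟩ with 2k+1 blocks:
pairwise disjoint nonempty blocks covering ⟨n⟩, with 0 ∈ S₀, S₀ closed under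
negation, and S_{2i} = -S_{2i-1} for i ≥ 1. -/
def IsOrderedB (n k : ℕ) (S : Fin (2*k+1) → Finset ℤ) : Prop :=
  (∀ i, (S i).Nonempty) ∧
  (∀ i j, i ≠ j → Disjoint (S i) (S j)) ∧
  (Finset.univ.biUnion S = angleB n) ∧
  ((0 : ℤ) ∈ S 0) ∧
  (∀ x ∈ S 0, -x ∈ S 0) ∧
  (∀ i : ℕ, 1 ≤ i → ∀ h : 2*i < 2*k+1,
    S ⟨2*i, h⟩ = (S ⟨2*i-1, by omega⟩).image (fun x => -x))

/-- m_j = min |S_j| (0 if the block is empty). -/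
def mB {m : ℕ} (S : Fin m → Finset ℤ) (j : Fin m) : ℤ :=
  WithTop.untopD 0 (((S j).image (fun x => |x|)).min)

/-- M_j = max |S_j| (0 if the block is empty). -/
def MB {m : ℕ} (S : Fin m → Finset ℤ) (j : Fin m) : ℤ :=
  WithBot.unbotD 0 (((S j).image (fun x => |x|)).max)

/-- A standard type B partition: ordered, with m_{2i} ∈ S_{2i} for i ≥ 1 and
0 = m₀ < m₂ < m₄ < ... < m_{2k}. -/
def IsStandardB (n k : ℕ) (S : Fin (2*k+1) → Finset ℤ) : Prop :=
  IsOrderedB n k S ∧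
  (∀ i : ℕ, 1 ≤ i → ∀ h : 2*i < 2*k+1, mB S ⟨2*i, h⟩ ∈ S ⟨2*i, h⟩) ∧
  (∀ i : ℕ, ∀ h : 2*(i+1) < 2*k+1, mB S ⟨2*i, by omega⟩ < mB S ⟨2*(i+1), h⟩)

/-- inv ρ: number of pairs (s, S_j) with s ∈ S_i for some i < j and s ≥ m_j. -/
noncomputable def invB {m : ℕ} (S : Fin m → Finset ℤ) : ℕ :=
  {p : ℤ × Fin m | (∃ i < p.2, p.1 ∈ S i) ∧ mB S p.2 ≤ p.1}.ncard

/-- ros_B = inv. -/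
noncomputable def rosB {m : ℕ} (S : Fin m → Finset ℤ) : ℕ := invB S

/-- los_{B'}: pairs (s, S_j) with s ∈ S_i for some i > j and s ≥ m_j. -/
noncomputable def losB' {m : ℕ} (S : Fin m → Finset ℤ) : ℕ :=
  {p : ℤ × Fin m | (∃ i, p.2 < i ∧ p.1 ∈ S i) ∧ mB S p.2 ≤ p.1}.ncard

/-- lob_{B'}: pairs (s, S_j) with s ∈ S_i for some i > j and 0 < s ≤ m_j. -/
noncomputable def lobB' {m : ℕ} (S : Fin m → Finset ℤ) : ℕ :=
  {p : ℤ × Fin m | (∃ i, p.2 < i ∧ p.1 ∈ S i) ∧ 0 < p.1 ∧ p.1 ≤ mB S p.2}.ncard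

/-- rcb_B: pairs (s, S_j) with s ∈ S_i for some i < j and 0 < s ≤ M_j. -/
noncomputable def rcbB {m : ℕ} (S : Fin m → Finset ℤ) : ℕ :=
  {p : ℤ × Fin m | (∃ i < p.2, p.1 ∈ S i) ∧ 0 < p.1 ∧ p.1 ≤ MB S p.2}.ncard

/-- rob_B: pairs (s, S_j) with s ∈ S_i for some i < j and 0 < s ≤ m_j. -/
noncomputable def robB {m : ℕ} (S : Fin m → Finset ℤ) : ℕ :=
  {p : ℤ × Fin m | (∃ i < p.2, p.1 ∈ S i) ∧ 0 < p.1 ∧ p.1 ≤ mB S p.2}.ncard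

/-- rcs_B: pairs (s, S_j) with s ∈ S_i for some i < j and s ≥ M_j. -/
noncomputable def rcsB {m : ℕ} (S : Fin m → Finset ℤ) : ℕ :=
  {p : ℤ × Fin m | (∃ i < p.2, p.1 ∈ S i) ∧ MB S p.2 ≤ p.1}.ncard

/-- Type B Stirling numbers of the second kind. -/
def StirB : ℕ → ℕ → ℕ
  | 0, 0 => 1
  | 0, _+1 => 0
  | n+1, 0 => StirB n 0
  | n+1, k+1 => StirB n k + (2*(k+1)+1) * StirB n (k+1)

/-- [m] = 1 + q + ... + q^{m-1}. -/
noncomputable def qb (m : ℕ) : Polynomial ℤ := ∑ i ∈ Finset.range m, (Polynomial.X : Polynomial ℤ) ^ i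

/-- Type B q-Stirling numbers of the second kind. -/
noncomputable def qStirB : ℕ → ℕ → Polynomial ℤ
  | 0, 0 => 1
  | 0, _+1 => 0
  | n+1, 0 => qStirB n 0
  | n+1, k+1 => qStirB n k + qb (2*(k+1)+1) * qStirB n (k+1)

/-- [2k]!! = [2k][2k-2]⋯[2]. -/
noncomputable def qdf : ℕ → Polynomial ℤ
  | 0 => 1
  | k+1 => qb (2*(k+1)) * qdf k

/-- The complement map on ⟨n⟩: i ↦ n+1-i for i > 0, -i ↦ -(n+1-i), 0 ↦ 0. -/
def complB (n : ℕ) (x : ℤ) : ℤ :=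
  if 0 < x then (n : ℤ) + 1 - x else if x < 0 then -((n : ℤ) + 1) - x else 0

/-- Complement of a partition, blockwise. -/
def complP (n : ℕ) {m : ℕ} (S : Fin m → Finset ℤ) : Fin m → Finset ℤ :=
  fun j => (S j).image (complB n)

/-- The index of the block paired with block i: 0 ↦ 0, 2ℓ-1 ↦ 2ℓ, 2ℓ ↦ 2ℓ-1. -/
def pairIdx (k : ℕ) (i : Fin (2*k+1)) : Fin (2*k+1) :=
  if i.val = 0 then i
  else if h2 : i.val % 2 = 1 then ⟨i.val + 1, by omega⟩ else ⟨i.val - 1, by omega⟩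

/-!
Both sides satisfy the recurrence defining `qStirB`. Let `S` be a standard partition of `⟨n+1⟩`
with `2k+3` blocks. If its last block is `{n+1}`, the block before it is `{-(n+1)}`; removing the
two leaves a standard partition of `⟨n⟩` with `2k+1` blocks, and appending them back adds to
`los_{B'}` the `2k+2` pairs `(n+1, S_j)` with `j < 2k+2`. Otherwise `n+1` lies in some block
`S_p`, and deleting `±(n+1)` leaves a standard partition of `⟨n⟩` with `2k+3` blocks (no block
becomes empty, because only the last block of a standard partition can be `{n+1}`); inserting
`n+1` into `S_p` and `-(n+1)` into its partner adds the `p` pairs `(n+1, S_j)` with `j < p`.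
Hence the generating polynomial `L(n, k)` of `los_{B'}` satisfies
`L(n+1, k+1) = q^{2k+2} L(n, k) + [2k+3] L(n, k+1)`, which is also the recurrence of
`q^{k(k+1)} S_B[n, k]` because `(k+1)(k+2) = k(k+1) + 2k+2`.
-/

namespace TypeB

theorem abs_le_natCast_add_one_iff {x : ℤ} {n : ℕ} :
    |x| ≤ ((n + 1 : ℕ) : ℤ) ↔ |x| ≤ n ∨ x = n + 1 ∨ x = -(n + 1) := by
  push_cast; rw [abs_le, abs_le]; omega

theorem abs_natCast_add_one (n : ℕ) : |(n : ℤ) + 1| = n + 1 := abs_of_nonneg (by positivity)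

theorem abs_neg_natCast_add_one (n : ℕ) : |-((n : ℤ) + 1)| = n + 1 := by
  rw [abs_neg, abs_natCast_add_one]

def minAbs (s : Finset ℤ) : ℤ := WithTop.untopD 0 ((s.image fun x => |x|).min)

theorem mB_eq_minAbs {m : ℕ} (S : Fin m → Finset ℤ) (j : Fin m) : mB S j = minAbs (S j) := rfl

theorem minAbs_eq_min' {s : Finset ℤ} (hs : s.Nonempty) :
    minAbs s = (s.image fun x => |x|).min' (hs.image _) := by
  rw [minAbs, ← Finset.coe_min' (hs.image _), WithTop.untopD_coe]

theorem minAbs_le {s : Finset ℤ} {x : ℤ} (hx : x ∈ s) : minAbs s ≤ |x| := by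
  rw [minAbs_eq_min' ⟨x, hx⟩]
  exact min'_le _ _ (mem_image_of_mem _ hx)

theorem exists_abs_eq_minAbs {s : Finset ℤ} (hs : s.Nonempty) : ∃ x ∈ s, |x| = minAbs s := by
  simpa [minAbs_eq_min' hs] using min'_mem (s.image fun x => |x|) (hs.image _)

theorem minAbs_nonneg (s : Finset ℤ) : 0 ≤ minAbs s := by
  rcases s.eq_empty_or_nonempty with rfl | hs
  · rfl
  · obtain ⟨x, -, hx⟩ := exists_abs_eq_minAbs hs
    exact hx ▸ abs_nonneg x

theorem minAbs_singleton (a : ℤ) : minAbs {a} = |a| := by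
  simp [minAbs]

theorem minAbs_union_of_le {s t : Finset ℤ} (hs : s.Nonempty)
    (hst : ∀ x ∈ s, ∀ y ∈ t, |x| ≤ |y|) : minAbs (s ∪ t) = minAbs s := by
  obtain ⟨x, hx, hxs⟩ := exists_abs_eq_minAbs hs
  obtain ⟨y, hy, hyst⟩ := exists_abs_eq_minAbs (hs.mono subset_union_left)
  refine le_antisymm (hxs ▸ minAbs_le (mem_union_left t hx)) (hyst ▸ ?_)
  rcases mem_union.1 hy with hy | hy
  · exact minAbs_le hy
  · exact (minAbs_le hx).trans (hst x hx y hy)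

theorem val_pairIdx {k : ℕ} (j : Fin (2*k+1)) :
    (pairIdx k j).val =
      if j.val = 0 then 0 else if j.val % 2 = 1 then j.val + 1 else j.val - 1 := by
  unfold pairIdx
  split_ifs <;> simp_all

@[simp]
theorem pairIdx_pairIdx {k : ℕ} (j : Fin (2*k+1)) : pairIdx k (pairIdx k j) = j := by
  ext
  simp only [val_pairIdx]
  split_ifs <;> first | omega | contradiction

@[simp]
theorem pairIdx_zero (k : ℕ) : pairIdx k 0 = 0 := by
  simp [pairIdx]

theorem pairIdx_two_mul {k i : ℕ} (hi : 1 ≤ i) (h : 2*i < 2*k+1) :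
    pairIdx k ⟨2*i, h⟩ = ⟨2*i-1, by omega⟩ := by
  ext
  simp only [val_pairIdx]
  split_ifs <;> omega

theorem exists_eq_two_mul_or_pairIdx {k : ℕ} {j : Fin (2*k+1)} (hj : j ≠ 0) :
    ∃ i, 1 ≤ i ∧ ∃ h : 2*i < 2*k+1, j = ⟨2*i, h⟩ ∨ j = pairIdx k ⟨2*i, h⟩ := by
  have h0 : j.val ≠ 0 := fun h => hj (Fin.ext (by simp [h]))
  obtain ⟨i, hji | hji⟩ := Nat.even_or_odd' j.val
  · exact ⟨i, by omega, by omega, Or.inl (Fin.ext hji)⟩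
  · refine ⟨i+1, by omega, by omega, Or.inr ?_⟩
    rw [pairIdx_two_mul (by omega)]
    exact Fin.ext (by simp only; omega)

theorem pairIdx_ne_self {k : ℕ} {j : Fin (2*k+1)} (hj : j ≠ 0) : pairIdx k j ≠ j := by
  have h0 : j.val ≠ 0 := fun h => hj (Fin.ext (by simp [h]))
  intro h
  have := congrArg Fin.val h
  rw [val_pairIdx] at this
  split_ifs at this <;> omega

theorem mem_angleB {n : ℕ} {x : ℤ} : x ∈ angleB n ↔ |x| ≤ n := by
  rw [angleB, mem_Icc, abs_le]

end TypeB

open TypeB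

namespace IsOrderedB

variable {n k : ℕ} {S : Fin (2*k+1) → Finset ℤ}

theorem nonempty (hS : IsOrderedB n k S) (j : Fin (2*k+1)) : (S j).Nonempty := hS.1 j

theorem zero_mem (hS : IsOrderedB n k S) : (0 : ℤ) ∈ S 0 := hS.2.2.2.1

theorem abs_le (hS : IsOrderedB n k S) {j : Fin (2*k+1)} {x : ℤ} (hx : x ∈ S j) : |x| ≤ n := by
  rw [← mem_angleB, ← hS.2.2.1]
  exact mem_biUnion.2 ⟨j, mem_univ _, hx⟩

theorem exists_mem (hS : IsOrderedB n k S) {x : ℤ} (hx : |x| ≤ n) : ∃ j, x ∈ S j := by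
  rw [← mem_angleB, ← hS.2.2.1] at hx
  simpa using hx

theorem eq_of_mem (hS : IsOrderedB n k S) {x : ℤ} {i j : Fin (2*k+1)}
    (hi : x ∈ S i) (hj : x ∈ S j) : i = j := by
  by_contra h
  exact disjoint_left.1 (hS.2.1 i j h) hi hj

theorem neg_mem (hS : IsOrderedB n k S) {j : Fin (2*k+1)} {x : ℤ} (hx : x ∈ S j) :
    -x ∈ S (pairIdx k j) := by
  have hpair : ∀ i (hi : 1 ≤ i) (h : 2*i < 2*k+1) x,
      x ∈ S ⟨2*i, h⟩ ↔ -x ∈ S ⟨2*i-1, by omega⟩ := by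
    intro i hi h x
    rw [hS.2.2.2.2.2 i hi h, mem_image]
    exact ⟨fun ⟨y, hy, hyx⟩ => hyx ▸ (neg_neg y).symm ▸ hy, fun hx => ⟨-x, hx, neg_neg x⟩⟩
  rcases eq_or_ne j 0 with rfl | hj
  · simpa using hS.2.2.2.2.1 x hx
  obtain ⟨i, hi, h, rfl | rfl⟩ := exists_eq_two_mul_or_pairIdx hj
  · rw [pairIdx_two_mul hi]
    exact (hpair i hi h x).1 hx
  · rw [pairIdx_pairIdx, hpair i hi h, neg_neg]
    rwa [pairIdx_two_mul hi] at hx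

theorem neg_mem_iff (hS : IsOrderedB n k S) {j : Fin (2*k+1)} {x : ℤ} :
    -x ∈ S (pairIdx k j) ↔ x ∈ S j :=
  ⟨fun h => by simpa using hS.neg_mem h, hS.neg_mem⟩

theorem mB_le (hS : IsOrderedB n k S) (j : Fin (2*k+1)) : mB S j ≤ n := by
  obtain ⟨x, hx, hxj⟩ := exists_abs_eq_minAbs (hS.nonempty j)
  rw [mB_eq_minAbs, ← hxj]
  exact hS.abs_le hx

theorem of_mem (nonempty : ∀ j, (S j).Nonempty) (cover : ∀ x, (∃ j, x ∈ S j) ↔ |x| ≤ n)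
    (unique : ∀ x i j, x ∈ S i → x ∈ S j → i = j) (zero_mem : 0 ∈ S 0)
    (neg_mem : ∀ j x, x ∈ S j → -x ∈ S (pairIdx k j)) : IsOrderedB n k S := by
  refine ⟨nonempty, fun i j hij => disjoint_left.2 fun x hi hj => hij (unique x i j hi hj),
    ?_, zero_mem, fun x hx => by simpa using neg_mem 0 x hx, fun i hi h => ?_⟩
  · ext x
    simpa [mem_angleB] using cover x
  · ext x
    rw [mem_image]
    refine ⟨fun hx => ⟨-x, ?_, neg_neg x⟩, fun ⟨y, hy, hyx⟩ => hyx ▸ ?_⟩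
    · simpa [pairIdx_two_mul hi] using neg_mem _ x hx
    · simpa [← pairIdx_two_mul hi h] using neg_mem _ y hy

theorem natCast_add_one_notMem (hS : IsOrderedB n k S) (j : Fin (2*k+1)) : (n:ℤ) + 1 ∉ S j :=
  fun h => by have := hS.abs_le h; rw [abs_natCast_add_one] at this; omega

theorem neg_natCast_add_one_notMem (hS : IsOrderedB n k S) (j : Fin (2*k+1)) :
    -((n:ℤ) + 1) ∉ S j :=
  fun h => by have := hS.abs_le h; rw [abs_neg_natCast_add_one] at this; omega

end IsOrderedB

namespace IsStandardB

variable {n k : ℕ} {S : Fin (2*k+1) → Finset ℤ} {p : Fin (2*k+1)}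

theorem eq_last_of_eq_singleton (hS : IsStandardB (n+1) k S)
    (hp : S p = {(n:ℤ) + 1}) : p = Fin.last (2*k) := by
  -- An even block `{n+1}` before the last would force `m_{2i+2} > n+1`; an odd one would make
  -- its partner `{-(n+1)}`, which does not contain its minimum `n+1`.
  have hp0 : p ≠ 0 := by
    rintro rfl
    have := hS.1.zero_mem
    rw [hp, mem_singleton] at this
    omega
  obtain ⟨i, hi, h, rfl | rfl⟩ := exists_eq_two_mul_or_pairIdx hp0
  · by_contra hlast
    have h' : 2*(i+1) < 2*k+1 := by
      have : 2*i ≠ 2*k := fun e => hlast (Fin.ext (by simp [e]))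
      omega
    have hmB : mB S ⟨2*i, h⟩ = n + 1 := by
      rw [mB_eq_minAbs, hp, minAbs_singleton, abs_natCast_add_one]
    have := hS.1.mB_le ⟨2*(i+1), h'⟩
    push_cast at this
    linarith [hS.2.2 i h']
  · have := hS.1.neg_mem (hS.2.1 i hi h)
    rw [hp, mem_singleton] at this
    linarith [minAbs_nonneg (S ⟨2*i, h⟩), mB_eq_minAbs S ⟨2*i, h⟩]

theorem exists_mem_abs_le (hS : IsStandardB (n+1) k S) (hp : (n:ℤ) + 1 ∈ S p)
    (hlast : S (Fin.last (2*k)) ≠ {(n:ℤ) + 1}) (j : Fin (2*k+1)) : ∃ x ∈ S j, |x| ≤ n := by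
  have hneg := hS.1.neg_mem hp
  have hpx : ∃ x ∈ S p, |x| ≤ n := by
    obtain ⟨y, hy, hyne⟩ : ∃ y ∈ S p, y ≠ (n:ℤ) + 1 := by
      by_contra! h
      have hsingle := eq_singleton_iff_unique_mem.2 ⟨hp, h⟩
      obtain rfl := hS.eq_last_of_eq_singleton hsingle
      exact hlast hsingle
    rcases abs_le_natCast_add_one_iff.1 (hS.1.abs_le hy) with hy' | rfl | rfl
    · exact ⟨y, hy, hy'⟩
    · exact absurd rfl hyne
    · obtain rfl : p = 0 := by_contra fun h0 => pairIdx_ne_self h0 (hS.1.eq_of_mem hneg hy)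
      exact ⟨0, hS.1.zero_mem, by simp⟩
  obtain ⟨y, hy⟩ := hS.1.nonempty j
  rcases abs_le_natCast_add_one_iff.1 (hS.1.abs_le hy) with hy' | rfl | rfl
  · exact ⟨y, hy, hy'⟩
  · exact hS.1.eq_of_mem hp hy ▸ hpx
  · obtain ⟨x, hx, hxn⟩ := hpx
    exact ⟨-x, hS.1.eq_of_mem hneg hy ▸ hS.1.neg_mem hx, by rwa [abs_neg]⟩

end IsStandardB

namespace TypeB

section InsertMax

def insertMax (n : ℕ) {k : ℕ} (p : Fin (2*k+1)) (ρ : Fin (2*k+1) → Finset ℤ) :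
    Fin (2*k+1) → Finset ℤ := fun j =>
  ρ j ∪ ((if j = p then {(n:ℤ)+1} else ∅) ∪ (if j = pairIdx k p then {-((n:ℤ)+1)} else ∅))

def eraseMax (n : ℕ) {m : ℕ} (S : Fin m → Finset ℤ) : Fin m → Finset ℤ :=
  fun j => (S j).filter fun x => |x| ≤ n

variable {n k : ℕ} {ρ S : Fin (2*k+1) → Finset ℤ} {p j : Fin (2*k+1)} {x : ℤ}

theorem mem_insertMax : x ∈ insertMax n p ρ j ↔
    x ∈ ρ j ∨ (x = n+1 ∧ j = p) ∨ (x = -(n+1) ∧ j = pairIdx k p) := by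
  simp only [insertMax, mem_union]
  split_ifs <;> simp_all

theorem mem_eraseMax : x ∈ eraseMax n S j ↔ x ∈ S j ∧ |x| ≤ n := mem_filter

theorem mem_insertMax_of_abs_le (hx : |x| ≤ n) : x ∈ insertMax n p ρ j ↔ x ∈ ρ j := by
  have := abs_le.1 hx
  rw [mem_insertMax, or_iff_left]
  rintro (⟨rfl, -⟩ | ⟨rfl, -⟩) <;> omega

theorem natCast_add_one_mem_insertMax (hρ : IsOrderedB n k ρ) :
    (n:ℤ) + 1 ∈ insertMax n p ρ j ↔ j = p := by
  simp only [mem_insertMax, hρ.natCast_add_one_notMem, true_and, false_or, or_iff_left_iff_imp,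
    and_imp]
  omega

theorem neg_natCast_add_one_mem_insertMax (hρ : IsOrderedB n k ρ) :
    -((n:ℤ) + 1) ∈ insertMax n p ρ j ↔ j = pairIdx k p := by
  simp only [mem_insertMax, hρ.neg_natCast_add_one_notMem, true_and, false_or, or_iff_right_iff_imp,
    and_imp]
  omega

theorem mB_insertMax (hρ : IsOrderedB n k ρ) (j : Fin (2*k+1)) :
    mB (insertMax n p ρ) j = mB ρ j := by
  refine minAbs_union_of_le (hρ.nonempty j) fun x hx y hy => ?_
  have hy' : y = n + 1 ∨ y = -(n + 1) := by split_ifs at hy <;> simp_all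
  rcases hy' with rfl | rfl
  · linarith [hρ.abs_le hx, abs_natCast_add_one n]
  · linarith [hρ.abs_le hx, abs_neg_natCast_add_one n]

theorem isOrderedB_insertMax (hρ : IsOrderedB n k ρ) (p : Fin (2*k+1)) :
    IsOrderedB (n+1) k (insertMax n p ρ) := by
  refine .of_mem (fun j => (hρ.nonempty j).mono subset_union_left) (fun x => ?_)
    (fun x i j hi hj => ?_) (mem_union_left _ hρ.zero_mem) (fun j x hx => ?_)
  · rw [abs_le_natCast_add_one_iff]
    constructor
    · rintro ⟨j, hj⟩
      rcases mem_insertMax.1 hj with h | ⟨rfl, -⟩ | ⟨rfl, -⟩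
      exacts [Or.inl (hρ.abs_le h), Or.inr (Or.inl rfl), Or.inr (Or.inr rfl)]
    · rintro (hx | rfl | rfl)
      · obtain ⟨j, hj⟩ := hρ.exists_mem hx
        exact ⟨j, (mem_insertMax_of_abs_le hx).2 hj⟩
      · exact ⟨p, (natCast_add_one_mem_insertMax hρ).2 rfl⟩
      · exact ⟨_, (neg_natCast_add_one_mem_insertMax hρ).2 rfl⟩
  · rcases mem_insertMax.1 hi with h | ⟨rfl, rfl⟩ | ⟨rfl, rfl⟩
    · exact hρ.eq_of_mem h ((mem_insertMax_of_abs_le (hρ.abs_le h)).1 hj)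
    · exact ((natCast_add_one_mem_insertMax hρ).1 hj).symm
    · exact ((neg_natCast_add_one_mem_insertMax hρ).1 hj).symm
  · rcases mem_insertMax.1 hx with h | ⟨rfl, rfl⟩ | ⟨rfl, rfl⟩
    · exact (mem_insertMax_of_abs_le (by rw [abs_neg]; exact hρ.abs_le h)).2 (hρ.neg_mem h)
    · exact (neg_natCast_add_one_mem_insertMax hρ).2 rfl
    · rw [neg_neg]
      exact (natCast_add_one_mem_insertMax hρ).2 (pairIdx_pairIdx p)

theorem isStandardB_insertMax (hρ : IsStandardB n k ρ) (p : Fin (2*k+1)) :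
    IsStandardB (n+1) k (insertMax n p ρ) :=
  ⟨isOrderedB_insertMax hρ.1 p,
    fun i hi h => by rw [mB_insertMax hρ.1]; exact mem_union_left _ (hρ.2.1 i hi h),
    fun i h => by simpa only [mB_insertMax hρ.1] using hρ.2.2 i h⟩

theorem insertMax_last_ne (hρ : IsOrderedB n k ρ) (p : Fin (2*k+1)) :
    insertMax n p ρ (Fin.last (2*k)) ≠ {(n:ℤ) + 1} := by
  intro h
  obtain ⟨y, hy⟩ := hρ.nonempty (Fin.last (2*k))
  have : y ∈ insertMax n p ρ (Fin.last (2*k)) := mem_union_left _ hy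
  rw [h, mem_singleton] at this
  exact hρ.natCast_add_one_notMem _ (this ▸ hy)

theorem eraseMax_insertMax (hρ : IsOrderedB n k ρ) (p : Fin (2*k+1)) :
    eraseMax n (insertMax n p ρ) = ρ := by
  ext j x
  rw [mem_eraseMax]
  exact ⟨fun ⟨h, hx⟩ => (mem_insertMax_of_abs_le hx).1 h,
    fun h => ⟨(mem_insertMax_of_abs_le (hρ.abs_le h)).2 h, hρ.abs_le h⟩⟩

theorem insertMax_eraseMax (hS : IsOrderedB (n+1) k S) (hp : (n:ℤ) + 1 ∈ S p) :
    insertMax n p (eraseMax n S) = S := by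
  ext j x
  rw [mem_insertMax, mem_eraseMax]
  constructor
  · rintro (⟨h, -⟩ | ⟨rfl, rfl⟩ | ⟨rfl, rfl⟩)
    exacts [h, hp, hS.neg_mem hp]
  · intro h
    rcases abs_le_natCast_add_one_iff.1 (hS.abs_le h) with hx | rfl | rfl
    · exact Or.inl ⟨h, hx⟩
    · exact Or.inr (Or.inl ⟨rfl, hS.eq_of_mem h hp⟩)
    · exact Or.inr (Or.inr ⟨rfl, hS.eq_of_mem h (hS.neg_mem hp)⟩)

theorem isOrderedB_eraseMax (hS : IsOrderedB (n+1) k S) (hsmall : ∀ j, ∃ x ∈ S j, |x| ≤ n) :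
    IsOrderedB n k (eraseMax n S) := by
  refine .of_mem (fun j => ?_) (fun x => ⟨fun ⟨j, hj⟩ => (mem_eraseMax.1 hj).2, fun hx => ?_⟩)
    (fun x i j hi hj => hS.eq_of_mem (mem_eraseMax.1 hi).1 (mem_eraseMax.1 hj).1)
    (mem_eraseMax.2 ⟨hS.zero_mem, by simp⟩) (fun j x hx => ?_)
  · obtain ⟨x, hx, hxn⟩ := hsmall j
    exact ⟨x, mem_eraseMax.2 ⟨hx, hxn⟩⟩
  · obtain ⟨j, hj⟩ := hS.exists_mem (abs_le_natCast_add_one_iff.2 (Or.inl hx))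
    exact ⟨j, mem_eraseMax.2 ⟨hj, hx⟩⟩
  · obtain ⟨hx, hxn⟩ := mem_eraseMax.1 hx
    exact mem_eraseMax.2 ⟨hS.neg_mem hx, by rwa [abs_neg]⟩

theorem isStandardB_eraseMax (hS : IsStandardB (n+1) k S) (hp : (n:ℤ) + 1 ∈ S p)
    (hlast : S (Fin.last (2*k)) ≠ {(n:ℤ) + 1}) : IsStandardB n k (eraseMax n S) := by
  have hord := isOrderedB_eraseMax hS.1 (hS.exists_mem_abs_le hp hlast)
  have hmB (j : Fin (2*k+1)) : mB (eraseMax n S) j = mB S j := by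
    conv_rhs => rw [← insertMax_eraseMax hS.1 hp]
    exact (mB_insertMax hord j).symm
  refine ⟨hord, fun i hi h => ?_, fun i h => by simpa only [hmB] using hS.2.2 i h⟩
  refine mem_eraseMax.2 ⟨hmB _ ▸ hS.2.1 i hi h, ?_⟩
  rw [mB_eq_minAbs, abs_of_nonneg (minAbs_nonneg _), ← mB_eq_minAbs]
  exact hord.mB_le _

end InsertMax

section AppendMax

def appendMax (n : ℕ) {k : ℕ} (ρ : Fin (2*k+1) → Finset ℤ) : Fin (2*(k+1)+1) → Finset ℤ :=
  fun j => if h : j.val < 2*k+1 then ρ ⟨j.val, h⟩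
    else if j.val = 2*k+1 then {-((n:ℤ)+1)} else {(n:ℤ)+1}

def initBlocks {k : ℕ} (S : Fin (2*(k+1)+1) → Finset ℤ) : Fin (2*k+1) → Finset ℤ :=
  fun j => S (Fin.castLE (by omega) j)

theorem eq_castLE_or_eq_mid_or_eq_last {k : ℕ} (j : Fin (2*(k+1)+1)) :
    (∃ i : Fin (2*k+1), j = Fin.castLE (by omega) i) ∨ j = ⟨2*k+1, by omega⟩ ∨ j = Fin.last _ := by
  rcases lt_or_ge j.val (2*k+1) with h | h
  · exact Or.inl ⟨⟨j.val, h⟩, rfl⟩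
  · have := j.isLt
    refine Or.inr (if h' : j.val = 2*k+1 then Or.inl (Fin.ext h') else Or.inr (Fin.ext ?_))
    simp only [Fin.val_last]
    omega

theorem pairIdx_castLE {k : ℕ} (j : Fin (2*k+1)) :
    pairIdx (k+1) (Fin.castLE (by omega) j) = Fin.castLE (by omega) (pairIdx k j) := by
  ext
  simp only [val_pairIdx, Fin.val_castLE]

theorem pairIdx_last (k : ℕ) : pairIdx (k+1) (Fin.last _) = ⟨2*k+1, by omega⟩ := by
  ext
  simp only [val_pairIdx, Fin.val_last]
  split_ifs <;> omega

variable {n k : ℕ} {ρ : Fin (2*k+1) → Finset ℤ} {x : ℤ}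

theorem appendMax_of_lt {j : Fin (2*(k+1)+1)} (h : j.val < 2*k+1) :
    appendMax n ρ j = ρ ⟨j.val, h⟩ :=
  dif_pos h

theorem mB_appendMax_of_lt {j : Fin (2*(k+1)+1)} (h : j.val < 2*k+1) :
    mB (appendMax n ρ) j = mB ρ ⟨j.val, h⟩ := by
  rw [mB_eq_minAbs, appendMax_of_lt h]
  rfl

@[simp]
theorem appendMax_castLE (j : Fin (2*k+1)) : appendMax n ρ (Fin.castLE (by omega) j) = ρ j :=
  appendMax_of_lt j.isLt

theorem appendMax_mid : appendMax n ρ ⟨2*k+1, by omega⟩ = {-((n:ℤ)+1)} := by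
  simp [appendMax]

theorem appendMax_last : appendMax n ρ (Fin.last _) = {(n:ℤ)+1} := by
  simp [appendMax]
  omega

theorem mB_appendMax_castLE (j : Fin (2*k+1)) :
    mB (appendMax n ρ) (Fin.castLE (by omega) j) = mB ρ j :=
  mB_appendMax_of_lt j.isLt

theorem mB_appendMax_last : mB (appendMax n ρ) (Fin.last _) = n + 1 := by
  rw [mB_eq_minAbs, appendMax_last, minAbs_singleton, abs_natCast_add_one]

theorem mem_appendMax_of_abs_le (hx : |x| ≤ n) {j : Fin (2*(k+1)+1)} :
    x ∈ appendMax n ρ j ↔ ∃ i, j = Fin.castLE (by omega) i ∧ x ∈ ρ i := by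
  have := abs_le.1 hx
  rcases eq_castLE_or_eq_mid_or_eq_last j with ⟨i, rfl⟩ | rfl | rfl
  · simp [Fin.castLE_inj]
  · simp [appendMax_mid, Fin.ext_iff]
    omega
  · simp [appendMax_last, Fin.ext_iff]
    omega

theorem natCast_add_one_mem_appendMax (hρ : IsOrderedB n k ρ) {j : Fin (2*(k+1)+1)} :
    (n:ℤ) + 1 ∈ appendMax n ρ j ↔ j = Fin.last _ := by
  rcases eq_castLE_or_eq_mid_or_eq_last j with ⟨i, rfl⟩ | rfl | rfl
  · simp only [appendMax_castLE, hρ.natCast_add_one_notMem, false_iff, Fin.ext_iff,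
      Fin.val_castLE, Fin.val_last]
    omega
  · simp [appendMax_mid, Fin.ext_iff]
    omega
  · simp [appendMax_last]

theorem neg_natCast_add_one_mem_appendMax (hρ : IsOrderedB n k ρ) {j : Fin (2*(k+1)+1)} :
    -((n:ℤ) + 1) ∈ appendMax n ρ j ↔ j = ⟨2*k+1, by omega⟩ := by
  rcases eq_castLE_or_eq_mid_or_eq_last j with ⟨i, rfl⟩ | rfl | rfl
  · simp only [appendMax_castLE, hρ.neg_natCast_add_one_notMem, false_iff, Fin.ext_iff,
      Fin.val_castLE]
    omega
  · simp [appendMax_mid]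
  · simp [appendMax_last, Fin.ext_iff]
    omega

theorem isOrderedB_appendMax (hρ : IsOrderedB n k ρ) : IsOrderedB (n+1) (k+1) (appendMax n ρ) := by
  refine .of_mem (fun j => ?_) (fun x => ?_) (fun x i j hi hj => ?_) ?_ (fun j x hx => ?_)
  · rcases eq_castLE_or_eq_mid_or_eq_last j with ⟨i, rfl⟩ | rfl | rfl
    · simpa using hρ.nonempty i
    · simp [appendMax_mid]
    · simp [appendMax_last]
  · rw [abs_le_natCast_add_one_iff]
    constructor
    · rintro ⟨j, hj⟩
      rcases eq_castLE_or_eq_mid_or_eq_last j with ⟨i, rfl⟩ | rfl | rfl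
      · exact Or.inl (hρ.abs_le (by simpa using hj))
      · exact Or.inr (Or.inr (by simpa [appendMax_mid] using hj))
      · exact Or.inr (Or.inl (by simpa [appendMax_last] using hj))
    · rintro (hx | rfl | rfl)
      · obtain ⟨j, hj⟩ := hρ.exists_mem hx
        exact ⟨Fin.castLE (by omega) j, by simpa using hj⟩
      · exact ⟨_, (natCast_add_one_mem_appendMax hρ).2 rfl⟩
      · exact ⟨_, (neg_natCast_add_one_mem_appendMax hρ).2 rfl⟩
  · rcases eq_castLE_or_eq_mid_or_eq_last i with ⟨i, rfl⟩ | rfl | rfl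
    · rw [appendMax_castLE] at hi
      obtain ⟨j, rfl, hj'⟩ := (mem_appendMax_of_abs_le (hρ.abs_le hi)).1 hj
      rw [hρ.eq_of_mem hi hj']
    · rw [appendMax_mid, mem_singleton] at hi
      exact ((neg_natCast_add_one_mem_appendMax hρ).1 (hi ▸ hj)).symm
    · rw [appendMax_last, mem_singleton] at hi
      exact ((natCast_add_one_mem_appendMax hρ).1 (hi ▸ hj)).symm
  · rw [← Fin.castLE_zero (n := 2*k) (m := 2*(k+1)) (by omega), appendMax_castLE]
    exact hρ.zero_mem
  · rcases eq_castLE_or_eq_mid_or_eq_last j with ⟨i, rfl⟩ | rfl | rfl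
    · rw [appendMax_castLE] at hx
      rw [pairIdx_castLE, appendMax_castLE]
      exact hρ.neg_mem hx
    · rw [appendMax_mid, mem_singleton] at hx
      rw [hx, neg_neg, ← pairIdx_last, pairIdx_pairIdx, appendMax_last]
      exact mem_singleton_self _
    · rw [appendMax_last, mem_singleton] at hx
      rw [hx, pairIdx_last, appendMax_mid]
      exact mem_singleton_self _

theorem isStandardB_appendMax (hρ : IsStandardB n k ρ) :
    IsStandardB (n+1) (k+1) (appendMax n ρ) := by
  refine ⟨isOrderedB_appendMax hρ.1, fun i hi h => ?_, fun i h => ?_⟩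
  · rcases lt_or_ge (2*i) (2*k+1) with h' | h'
    · rw [mB_appendMax_of_lt h', appendMax_of_lt h']
      exact hρ.2.1 i hi h'
    · have e : (⟨2*i, h⟩ : Fin (2*(k+1)+1)) = Fin.last _ := Fin.ext (by simp; omega)
      rw [e, mB_appendMax_last, appendMax_last]
      exact mem_singleton_self _
  · rw [mB_appendMax_of_lt (by simp only; omega)]
    rcases lt_or_ge (2*(i+1)) (2*k+1) with h' | h'
    · rw [mB_appendMax_of_lt h']
      exact hρ.2.2 i h'
    · have e : (⟨2*(i+1), h⟩ : Fin (2*(k+1)+1)) = Fin.last _ := Fin.ext (by simp; omega)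
      rw [e, mB_appendMax_last]
      exact lt_of_le_of_lt (hρ.1.mB_le _) (by simp)

theorem isOrderedB_of_appendMax (hT : IsOrderedB (n+1) (k+1) (appendMax n ρ)) :
    IsOrderedB n k ρ := by
  refine .of_mem (fun j => by simpa using hT.nonempty (Fin.castLE (by omega) j))
    (fun x => ⟨fun ⟨j, hj⟩ => ?_, fun hx => ?_⟩)
    (fun x i j hi hj => Fin.castLE_injective _ <| hT.eq_of_mem (j := Fin.castLE (by omega) j)
      (by simpa using hi) (by simpa using hj))
    ?_ (fun j x hx => ?_)
  · replace hj : x ∈ appendMax n ρ (Fin.castLE (by omega) j) := by rwa [appendMax_castLE]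
    rcases abs_le_natCast_add_one_iff.1 (hT.abs_le hj) with hx | rfl | rfl
    · exact hx
    · have := hT.eq_of_mem hj (appendMax_last ▸ mem_singleton_self _)
      simp [Fin.ext_iff] at this
      omega
    · have := hT.eq_of_mem hj (appendMax_mid ▸ mem_singleton_self _)
      simp [Fin.ext_iff] at this
      omega
  · obtain ⟨j, hj⟩ := hT.exists_mem (abs_le_natCast_add_one_iff.2 (Or.inl hx))
    obtain ⟨i, -, hi⟩ := (mem_appendMax_of_abs_le hx).1 hj
    exact ⟨i, hi⟩
  · have := hT.zero_mem
    rwa [← Fin.castLE_zero (n := 2*k) (m := 2*(k+1)) (by omega), appendMax_castLE] at this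
  · have := hT.neg_mem (j := Fin.castLE (by omega) j) (by simpa using hx)
    rwa [pairIdx_castLE, appendMax_castLE] at this

theorem isStandardB_of_appendMax (hT : IsStandardB (n+1) (k+1) (appendMax n ρ)) :
    IsStandardB n k ρ := by
  refine ⟨isOrderedB_of_appendMax hT.1, fun i hi h => ?_, fun i h => ?_⟩
  · have := hT.2.1 i hi (by omega)
    rwa [mB_appendMax_of_lt h, appendMax_of_lt h] at this
  · have := hT.2.2 i (by omega)
    rwa [mB_appendMax_of_lt (by simp only; omega), mB_appendMax_of_lt h] at this

theorem appendMax_initBlocks {S : Fin (2*(k+1)+1) → Finset ℤ} (hS : IsOrderedB (n+1) (k+1) S)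
    (hlast : S (Fin.last _) = {(n:ℤ) + 1}) : appendMax n (initBlocks S) = S := by
  funext j
  rcases eq_castLE_or_eq_mid_or_eq_last j with ⟨i, rfl⟩ | rfl | rfl
  · rw [appendMax_castLE]
    rfl
  · ext x
    rw [appendMax_mid, mem_singleton, ← pairIdx_last, ← hS.neg_mem_iff, pairIdx_pairIdx, hlast,
      mem_singleton, neg_eq_iff_eq_neg]
  · rw [appendMax_last, hlast]

theorem initBlocks_appendMax : initBlocks (appendMax n ρ) = ρ :=
  funext fun j => appendMax_castLE j

end AppendMax

section Los

def losSet {m : ℕ} (S : Fin m → Finset ℤ) : Set (ℤ × Fin m) :=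
  {x | (∃ i, x.2 < i ∧ x.1 ∈ S i) ∧ mB S x.2 ≤ x.1}

theorem losB'_eq_ncard {m : ℕ} (S : Fin m → Finset ℤ) : losB' S = (losSet S).ncard := rfl

theorem ncard_Iio_fin {m : ℕ} (q : Fin m) : (Set.Iio q).ncard = q := by
  rw [← coe_Iio, Set.ncard_coe_finset, Fin.card_Iio]

variable {n k : ℕ}

theorem losSet_finite {S : Fin (2*k+1) → Finset ℤ} (hS : IsOrderedB n k S) : (losSet S).Finite :=
  ((Set.finite_Icc (-(n:ℤ)) n).prod Set.finite_univ).subset fun _ ⟨⟨_, _, hx⟩, _⟩ =>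
    ⟨abs_le.1 (hS.abs_le hx), trivial⟩

theorem losSet_eq_union {T : Fin (2*k+1) → Finset ℤ} {q : Fin (2*k+1)}
    (hT : IsOrderedB (n+1) k T) (hq : (n:ℤ) + 1 ∈ T q) :
    losSet T = {x ∈ losSet T | |x.1| ≤ n} ∪ (fun j => ((n:ℤ) + 1, j)) '' Set.Iio q := by
  -- `-(n+1)` never counts since `m_j ≥ 0`, while `n+1` counts for exactly the blocks to the left
  -- of its own since `m_j ≤ n+1`.
  ext ⟨s, j⟩
  simp only [losSet, Set.mem_union, Set.mem_ofPred_eq, Set.mem_image,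
    Set.mem_Iio, Prod.mk.injEq]
  constructor
  · intro h
    have ⟨⟨i, hji, hs⟩, hm⟩ := h
    rcases abs_le_natCast_add_one_iff.1 (hT.abs_le hs) with hs' | rfl | rfl
    · exact Or.inl ⟨h, hs'⟩
    · exact Or.inr ⟨j, hT.eq_of_mem hs hq ▸ hji, rfl, rfl⟩
    · linarith [minAbs_nonneg (T j), mB_eq_minAbs T j]
  · rintro (⟨h, -⟩ | ⟨j, hj, rfl, rfl⟩)
    · exact h
    · exact ⟨⟨q, hj, hq⟩, by simpa using hT.mB_le j⟩

theorem losB'_eq_ncard_add {T : Fin (2*k+1) → Finset ℤ} {q : Fin (2*k+1)}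
    (hT : IsOrderedB (n+1) k T) (hq : (n:ℤ) + 1 ∈ T q) :
    losB' T = {x ∈ losSet T | |x.1| ≤ n}.ncard + q := by
  have hdisj : Disjoint {x ∈ losSet T | |x.1| ≤ n} ((fun j => ((n:ℤ) + 1, j)) '' Set.Iio q) := by
    refine Set.disjoint_left.2 fun x ⟨_, hx⟩ ⟨j, _, hjx⟩ => ?_
    rw [← hjx, abs_natCast_add_one] at hx
    omega
  conv_lhs => rw [losB'_eq_ncard, losSet_eq_union hT hq]
  rw [Set.ncard_union_eq hdisj ((losSet_finite hT).subset (Set.sep_subset _ _)) (Set.toFinite _),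
    Set.ncard_image_of_injective _ (Prod.mk_right_injective _), ncard_Iio_fin]

theorem losB'_insertMax {ρ : Fin (2*k+1) → Finset ℤ} (hρ : IsOrderedB n k ρ) (p : Fin (2*k+1)) :
    losB' (insertMax n p ρ) = losB' ρ + p := by
  have hsmall : {x ∈ losSet (insertMax n p ρ) | |x.1| ≤ n} = losSet ρ := by
    ext ⟨s, j⟩
    simp only [losSet, Set.mem_ofPred_eq, mB_insertMax hρ]
    constructor
    · rintro ⟨⟨⟨i, hji, hs⟩, hm⟩, hs'⟩
      exact ⟨⟨i, hji, (mem_insertMax_of_abs_le hs').1 hs⟩, hm⟩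
    · rintro ⟨⟨i, hji, hs⟩, hm⟩
      exact ⟨⟨⟨i, hji, (mem_insertMax_of_abs_le (hρ.abs_le hs)).2 hs⟩, hm⟩, hρ.abs_le hs⟩
  rw [losB'_eq_ncard_add (isOrderedB_insertMax hρ p) ((natCast_add_one_mem_insertMax hρ).2 rfl),
    hsmall, losB'_eq_ncard]

theorem losB'_appendMax {ρ : Fin (2*k+1) → Finset ℤ} (hρ : IsOrderedB n k ρ) :
    losB' (appendMax n ρ) = losB' ρ + (2*k+2) := by
  let e : ℤ × Fin (2*k+1) → ℤ × Fin (2*(k+1)+1) := Prod.map id (Fin.castLE (by omega))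
  have hsmall : {x ∈ losSet (appendMax n ρ) | |x.1| ≤ n} = e '' losSet ρ := by
    ext ⟨s, j⟩
    simp only [losSet, Set.mem_ofPred_eq, Set.mem_image, Prod.exists, e,
      Prod.map, id, Prod.mk.injEq]
    constructor
    · rintro ⟨⟨⟨i, hji, hsi⟩, hm⟩, hs'⟩
      obtain ⟨i, rfl, hs⟩ := (mem_appendMax_of_abs_le hs').1 hsi
      have hj : j.val < 2*k+1 := by
        have := Fin.lt_def.1 hji
        simp only [Fin.val_castLE] at this
        omega
      refine ⟨s, ⟨j.val, hj⟩, ⟨⟨i, hji, hs⟩, ?_⟩, rfl, rfl⟩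
      rwa [← mB_appendMax_castLE (n := n)]
    · rintro ⟨s, j, ⟨⟨i, hji, hs⟩, hm⟩, rfl, rfl⟩
      exact ⟨⟨⟨Fin.castLE (by omega) i, hji, by simpa using hs⟩, by simpa [mB_appendMax_castLE]⟩,
        hρ.abs_le hs⟩
  have he : Function.Injective e :=
    Function.Injective.prodMap Function.injective_id (Fin.castLE_injective _)
  rw [losB'_eq_ncard_add (isOrderedB_appendMax hρ) ((natCast_add_one_mem_appendMax hρ).2 rfl),
    hsmall, Set.ncard_image_of_injective _ he, losB'_eq_ncard, Fin.val_last]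
  ring

end Los

noncomputable def losGen (n k : ℕ) : ℤ[X] :=
  ∑ᶠ S ∈ {S : Fin (2*k+1) → Finset ℤ | IsStandardB n k S}, X ^ losB' S

def lastBlockMax (n k : ℕ) : Set (Fin (2*(k+1)+1) → Finset ℤ) :=
  {S | IsStandardB (n+1) (k+1) S ∧ S (Fin.last _) = {(n:ℤ) + 1}}

def maxInBlock (n k : ℕ) (p : Fin (2*k+1)) : Set (Fin (2*k+1) → Finset ℤ) :=
  {S | IsStandardB (n+1) k S ∧ (n:ℤ) + 1 ∈ S p ∧ S (Fin.last _) ≠ {(n:ℤ) + 1}}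

variable {n k : ℕ}

theorem finite_setOf_isStandardB (n k : ℕ) :
    {S : Fin (2*k+1) → Finset ℤ | IsStandardB n k S}.Finite :=
  (Set.Finite.pi fun _ => (angleB n).powerset.finite_toSet).subset fun _ hS _ _ =>
    mem_powerset.2 fun _ hx => mem_angleB.2 (hS.1.abs_le hx)

theorem bijOn_appendMax :
    Set.BijOn (appendMax n) {ρ | IsStandardB n k ρ} (lastBlockMax n k) :=
  Set.InvOn.bijOn ⟨fun _ _ => initBlocks_appendMax, fun _ hS => appendMax_initBlocks hS.1.1 hS.2⟩
    (fun _ hρ => ⟨isStandardB_appendMax hρ, appendMax_last⟩)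
    (fun _ hS => isStandardB_of_appendMax ((appendMax_initBlocks hS.1.1 hS.2).symm ▸ hS.1))

theorem bijOn_insertMax (p : Fin (2*k+1)) :
    Set.BijOn (insertMax n p) {ρ | IsStandardB n k ρ} (maxInBlock n k p) :=
  Set.InvOn.bijOn
    ⟨fun _ hρ => eraseMax_insertMax hρ.1 p, fun _ hS => insertMax_eraseMax hS.1.1 hS.2.1⟩
    (fun _ hρ => ⟨isStandardB_insertMax hρ p, (natCast_add_one_mem_insertMax hρ.1).2 rfl,
      insertMax_last_ne hρ.1 p⟩)
    (fun _ hS => isStandardB_eraseMax hS.1 hS.2.1 hS.2.2)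

theorem finsum_lastBlockMax :
    ∑ᶠ S ∈ lastBlockMax n k, (X : ℤ[X]) ^ losB' S = losGen n k * X ^ (2*k+2) := by
  rw [losGen, finsum_mem_mul]
  refine (finsum_mem_eq_of_bijOn _ bijOn_appendMax fun ρ hρ => ?_).symm
  rw [losB'_appendMax hρ.1, ← pow_add]

theorem finsum_maxInBlock (p : Fin (2*k+1)) :
    ∑ᶠ S ∈ maxInBlock n k p, (X : ℤ[X]) ^ losB' S = losGen n k * X ^ (p : ℕ) := by
  rw [losGen, finsum_mem_mul]
  refine (finsum_mem_eq_of_bijOn _ (bijOn_insertMax p) fun ρ hρ => ?_).symm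
  rw [losB'_insertMax hρ.1, ← pow_add]

theorem setOf_isStandardB_succ_succ (n k : ℕ) :
    {S : Fin (2*(k+1)+1) → Finset ℤ | IsStandardB (n+1) (k+1) S} =
      lastBlockMax n k ∪ ⋃ p, maxInBlock n (k+1) p := by
  ext S
  simp only [Set.mem_ofPred_eq, Set.mem_union, Set.mem_iUnion, lastBlockMax, maxInBlock]
  refine ⟨fun hS => ?_, by rintro (⟨hS, -⟩ | ⟨p, hS, -⟩) <;> exact hS⟩
  by_cases hlast : S (Fin.last _) = {(n:ℤ) + 1}
  · exact Or.inl ⟨hS, hlast⟩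
  · obtain ⟨p, hp⟩ := hS.1.exists_mem (abs_le_natCast_add_one_iff.2 (Or.inr (Or.inl rfl)))
    exact Or.inr ⟨p, hS, hp, hlast⟩

theorem losGen_succ_succ (n k : ℕ) :
    losGen (n+1) (k+1) = losGen n k * X ^ (2*k+2) + losGen n (k+1) * qb (2*(k+1)+1) := by
  have hfin := finite_setOf_isStandardB (n+1) (k+1)
  have hdisj : Disjoint (lastBlockMax n k) (⋃ p, maxInBlock n (k+1) p) :=
    Set.disjoint_iUnion_right.2 fun _ => Set.disjoint_left.2 fun _ hS hS' => hS'.2.2 hS.2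
  have hpw : Pairwise (Function.onFun Disjoint (maxInBlock n (k+1))) := fun p q hpq =>
    Set.disjoint_left.2 fun _ hS hS' => hpq (hS.1.1.eq_of_mem hS.2.1 hS'.2.1)
  have hfin' (p) : (maxInBlock n (k+1) p).Finite := hfin.subset fun _ hS => hS.1
  rw [losGen, setOf_isStandardB_succ_succ, finsum_mem_union hdisj (hfin.subset fun _ hS => hS.1)
    (Set.finite_iUnion hfin'), finsum_mem_iUnion hpw hfin', finsum_lastBlockMax]
  simp only [finsum_maxInBlock, finsum_eq_sum_of_fintype, ← mul_sum, qb,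
    Fin.sum_univ_eq_sum_range (fun i => (X : ℤ[X]) ^ i)]

theorem eq_zero_of_fin_one (j : Fin (2*0+1)) : j = 0 := Fin.ext (by omega)

theorem isStandardB_zero_iff {S : Fin (2*0+1) → Finset ℤ} :
    IsStandardB n 0 S ↔ S = fun _ => angleB n := by
  refine ⟨fun hS => funext fun j => ?_, fun hS => ⟨.of_mem ?_ ?_ ?_ ?_ ?_, ?_, ?_⟩⟩
  · ext x
    rw [mem_angleB, eq_zero_of_fin_one j]
    refine ⟨hS.1.abs_le, fun hx => ?_⟩
    obtain ⟨j, hj⟩ := hS.1.exists_mem hx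
    rwa [eq_zero_of_fin_one j] at hj
  all_goals subst hS
  · exact fun _ => ⟨0, mem_angleB.2 (by simp)⟩
  · exact fun x => ⟨fun ⟨_, hx⟩ => mem_angleB.1 hx, fun hx => ⟨0, mem_angleB.2 hx⟩⟩
  · exact fun _ i j _ _ => (eq_zero_of_fin_one i).trans (eq_zero_of_fin_one j).symm
  · exact mem_angleB.2 (by simp)
  · exact fun _ x hx => mem_angleB.2 (by rw [abs_neg]; exact mem_angleB.1 hx)
  · intro i hi h; omega
  · intro i h; omega

theorem losB'_of_fin_one (S : Fin (2*0+1) → Finset ℤ) : losB' S = 0 := by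
  have : losSet S = ∅ := Set.eq_empty_of_forall_notMem fun x ⟨⟨i, hi, _⟩, _⟩ =>
    hi.ne ((eq_zero_of_fin_one _).trans (eq_zero_of_fin_one i).symm)
  rw [losB'_eq_ncard, this, Set.ncard_empty]

theorem losGen_zero_right (n : ℕ) : losGen n 0 = 1 := by
  have : {S : Fin (2*0+1) → Finset ℤ | IsStandardB n 0 S} = {fun _ => angleB n} :=
    Set.ext fun _ => isStandardB_zero_iff
  rw [losGen, this, finsum_mem_singleton, losB'_of_fin_one, pow_zero]

theorem losGen_zero_succ (k : ℕ) : losGen 0 (k+1) = 0 := by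
  suffices {S : Fin (2*(k+1)+1) → Finset ℤ | IsStandardB 0 (k+1) S} = ∅ by
    rw [losGen, this, finsum_mem_empty]
  refine Set.eq_empty_of_forall_notMem fun S hS => ?_
  obtain ⟨x, hx⟩ := hS.1.nonempty 1
  obtain rfl : x = 0 := abs_nonpos_iff.1 (by simpa using hS.1.abs_le hx)
  exact absurd (hS.1.eq_of_mem hx hS.1.zero_mem) (by simp)

theorem qStirB_zero_right (n : ℕ) : qStirB n 0 = 1 := by
  induction n with
  | zero => rfl
  | succ n ih => rw [qStirB, ih]

end TypeB

/-- q^{k(k+1)} S_B[n,k] = Σ_{ρ standard} q^{los_{B'} ρ}. -/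
theorem stmt4 (n k : ℕ) :
    (Polynomial.X : Polynomial ℤ) ^ (k*(k+1)) * qStirB n k =
      ∑ᶠ S ∈ {S : Fin (2*k+1) → Finset ℤ | IsStandardB n k S},
        (Polynomial.X : Polynomial ℤ) ^ losB' S := by
  change _ = losGen n k
  induction n generalizing k with
  | zero =>
    cases k with
    | zero => simp [losGen_zero_right, qStirB_zero_right]
    | succ k => rw [losGen_zero_succ, qStirB, mul_zero]
  | succ n ih =>
    cases k with
    | zero => simp [losGen_zero_right, qStirB_zero_right]
    | succ k =>
      rw [losGen_succ_succ, ← ih, ← ih, qStirB,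
        show (k+1)*(k+1+1) = k*(k+1) + (2*k+2) by ring, pow_add]
      ring
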